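/- Define for J₂ > 0, η ∈ [0,1], and φ ∈ ℝ the quantity K(φ) = ∫_{−π}^{π} I₀(√(1 + η cos θ))·e^{−J₂·cos(2(θ + φ))} dθ/(2π). Then ∂K/∂φ has the same sign as sin φ·cos φ; in particular K is nondecreasing on [0, π/2] and nonincreasing on [π/2, π], so that φ = ±π/2 maximizes K over [−π, π]. -/

import Mathlib

open Real

/-- Modified Bessel function of the first kind of order 0. -/
noncomputable def besselI0 (x : ℝ) : ℝ :=
  ∑' n : ℕ, (x / 2) ^ (2 * n) / ((Nat.factorial n : ℝ)) ^ 2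

/-- The `J₂`-model partition function as a function of the phase `φ`. -/
noncomputable def KJ2 (J₂ η φ : ℝ) : ℝ :=
  ∫ θ in (-π)..π,
    besselI0 (Real.sqrt (1 + η * Real.cos θ))
      * Real.exp (-J₂ * Real.cos (2 * (θ + φ))) / (2 * π)

noncomputable def hfun (x : ℝ) : ℝ := ∑' n : ℕ, (x / 4) ^ n / ((Nat.factorial n : ℝ)) ^ 2

lemma hfun_term_le (x : ℝ) (n : ℕ) :
    |(x / 4) ^ n / ((Nat.factorial n : ℝ)) ^ 2| ≤ |x / 4| ^ n / (Nat.factorial n : ℝ) := by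
  have h1 : (1 : ℝ) ≤ (Nat.factorial n : ℝ) := by exact_mod_cast Nat.one_le_iff_ne_zero.2 (Nat.factorial_ne_zero n)
  rw [abs_div, abs_pow, abs_of_nonneg (by positivity : (0:ℝ) ≤ ((Nat.factorial n : ℝ)) ^ 2)]
  apply div_le_div_of_nonneg_left (by positivity) (by positivity) (by nlinarith)

lemma hfun_summable (x : ℝ) :
    Summable (fun n : ℕ => (x / 4) ^ n / ((Nat.factorial n : ℝ)) ^ 2) := by
  apply Summable.of_norm_bounded (Real.summable_pow_div_factorial |x / 4|)
  intro n
  rw [Real.norm_eq_abs]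
  exact hfun_term_le x n

lemma hfun_nonneg {x : ℝ} (hx : 0 ≤ x) : 0 ≤ hfun x :=
  tsum_nonneg fun n => by positivity

lemma hfun_mono {x y : ℝ} (hx : 0 ≤ x) (hxy : x ≤ y) : hfun x ≤ hfun y := by
  apply (hfun_summable x).tsum_le_tsum _ (hfun_summable y)
  intro n
  gcongr <;> linarith

lemma hfun_contOn : ContinuousOn hfun (Set.Icc (-4 : ℝ) 4) := by
  apply continuousOn_tsum (u := fun n => (1:ℝ) / (Nat.factorial n : ℝ))
  · intro n
    exact (Continuous.continuousOn (by continuity))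
  · simpa using Real.summable_pow_div_factorial 1
  · intro n x hx
    have h4 : |x / 4| ≤ 1 := by
      rw [abs_div]
      rw [div_le_one (by norm_num : (0:ℝ) < |(4:ℝ)|)]
      rw [abs_le]
      norm_num at hx ⊢
      exact hx
    calc ‖(x / 4) ^ n / ((Nat.factorial n : ℝ)) ^ 2‖ ≤ |x / 4| ^ n / (Nat.factorial n : ℝ) := by
            rw [Real.norm_eq_abs]
            exact hfun_term_le x n
      _ ≤ 1 / (Nat.factorial n : ℝ) := by
            gcongr
            exact pow_le_one₀ (abs_nonneg _) h4

lemma besselI0_sqrt {x : ℝ} (hx : 0 ≤ x) : besselI0 (Real.sqrt x) = hfun x := by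
  unfold besselI0 hfun
  congr 1
  funext n
  congr 1
  rw [pow_mul, div_pow, sq_sqrt hx]
  norm_num

lemma pow_even_mono {s t : ℝ} (ht : 0 ≤ t) (hts : t ≤ s) (hs : s ≤ 1) (n : ℕ) :
    (1 + t) ^ n + (1 - t) ^ n ≤ (1 + s) ^ n + (1 - s) ^ n := by
  induction n with
  | zero => simp
  | succ n ih =>
    have h1 : (1 + t) ^ n ≤ (1 + s) ^ n := pow_le_pow_left₀ (by linarith) (by linarith) n
    have h2 : (1 - s) ^ n ≤ (1 - t) ^ n := pow_le_pow_left₀ (by linarith) (by linarith) n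
    have hB0 : 0 ≤ (1 + t) ^ n - (1 - t) ^ n := by
      have := pow_le_pow_left₀ (show (0:ℝ) ≤ 1 - t by linarith) (show 1 - t ≤ 1 + t by linarith) n
      linarith
    have e1 : (1 + s) ^ (n + 1) + (1 - s) ^ (n + 1)
        = ((1 + s) ^ n + (1 - s) ^ n) + s * ((1 + s) ^ n - (1 - s) ^ n) := by ring
    have e2 : (1 + t) ^ (n + 1) + (1 - t) ^ (n + 1)
        = ((1 + t) ^ n + (1 - t) ^ n) + t * ((1 + t) ^ n - (1 - t) ^ n) := by ring
    have h3 : t * ((1 + t) ^ n - (1 - t) ^ n) ≤ s * ((1 + s) ^ n - (1 - s) ^ n) := by nlinarith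
    linarith

lemma hfun_pair_mono {s t : ℝ} (ht : 0 ≤ t) (hts : t ≤ s) (hs : s ≤ 1) :
    hfun (1 + t) + hfun (1 - t) ≤ hfun (1 + s) + hfun (1 - s) := by
  unfold hfun
  rw [← Summable.tsum_add (hfun_summable (1 + t)) (hfun_summable (1 - t)),
      ← Summable.tsum_add (hfun_summable (1 + s)) (hfun_summable (1 - s))]
  apply ((hfun_summable _).add (hfun_summable _)).tsum_le_tsum _ ((hfun_summable _).add (hfun_summable _))
  intro n
  have key := pow_even_mono ht hts hs n
  have e : ∀ y : ℝ, (y / 4) ^ n / ((Nat.factorial n : ℝ)) ^ 2 = y ^ n / (4 ^ n * ((Nat.factorial n : ℝ)) ^ 2) := by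
    intro y; rw [div_pow, div_div]
  simp only [e]
  rw [← add_div, ← add_div]
  gcongr

noncomputable def wf (η θ : ℝ) : ℝ := hfun (1 + η * Real.cos θ)

noncomputable def qf (J₂ θ : ℝ) : ℝ :=
  2 * J₂ * Real.sin (2 * θ) * Real.exp (-J₂ * Real.cos (2 * θ))

noncomputable def Df (J₂ η φ : ℝ) : ℝ :=
  ∫ θ in (-π)..π, wf η θ * qf J₂ (θ + φ) / (2 * π)

lemma arg_mem {η : ℝ} (hη : η ∈ Set.Icc (0:ℝ) 1) (θ : ℝ) :
    0 ≤ 1 + η * Real.cos θ ∧ 1 + η * Real.cos θ ≤ 2 := by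
  obtain ⟨h0, h1⟩ := hη
  have hc1 := Real.neg_one_le_cos θ
  have hc2 := Real.cos_le_one θ
  constructor <;> nlinarith

lemma wf_cont {η : ℝ} (hη : η ∈ Set.Icc (0:ℝ) 1) : Continuous (wf η) := by
  have hc : Continuous fun θ : ℝ => 1 + η * Real.cos θ := by continuity
  have : Continuous (hfun ∘ fun θ : ℝ => 1 + η * Real.cos θ) := by
    apply hfun_contOn.comp_continuous hc
    intro θ
    obtain ⟨h0, h2⟩ := arg_mem hη θ
    constructor <;> linarith
  exact this

lemma wf_nonneg {η : ℝ} (hη : η ∈ Set.Icc (0:ℝ) 1) (θ : ℝ) : 0 ≤ wf η θ :=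
  hfun_nonneg (arg_mem hη θ).1

lemma wf_le {η : ℝ} (hη : η ∈ Set.Icc (0:ℝ) 1) (θ : ℝ) : wf η θ ≤ hfun 2 :=
  hfun_mono (arg_mem hη θ).1 (arg_mem hη θ).2

lemma qf_cont (J₂ : ℝ) : Continuous (qf J₂) := by
  unfold qf; continuity

lemma qf_abs_le {J₂ : ℝ} (hJ₂ : 0 < J₂) (u : ℝ) : |qf J₂ u| ≤ 2 * J₂ * Real.exp J₂ := by
  unfold qf
  rw [abs_mul, Real.abs_exp, abs_mul]
  have h1 : |2 * J₂| = 2 * J₂ := abs_of_pos (by linarith)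
  have h2 : |Real.sin (2 * u)| ≤ 1 := Real.abs_sin_le_one _
  have h3 : Real.exp (-J₂ * Real.cos (2 * u)) ≤ Real.exp J₂ := by
    apply Real.exp_le_exp.2
    nlinarith [Real.neg_one_le_cos (2 * u)]
  rw [h1]
  have h4 : |2 * J₂| * |Real.sin (2*u)| ≤ 2 * J₂ := by
    rw [h1]; nlinarith
  rw [h1] at h4
  calc 2 * J₂ * |Real.sin (2*u)| * Real.exp (-J₂ * Real.cos (2*u))
      ≤ 2 * J₂ * Real.exp (-J₂ * Real.cos (2*u)) := by
        apply mul_le_mul_of_nonneg_right h4 (Real.exp_nonneg _)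
    _ ≤ 2 * J₂ * Real.exp J₂ := by nlinarith [Real.exp_pos (-J₂ * Real.cos (2*u))]

lemma KJ2_eq {J₂ η : ℝ} (hη : η ∈ Set.Icc (0:ℝ) 1) :
    KJ2 J₂ η = fun φ => ∫ θ in (-π)..π,
      wf η θ * Real.exp (-J₂ * Real.cos (2 * (θ + φ))) / (2 * π) := by
  funext φ
  unfold KJ2
  congr 1
  funext θ
  rw [besselI0_sqrt (arg_mem hη θ).1]
  rfl

lemma KJ2_hasDeriv {J₂ η : ℝ} (hJ₂ : 0 < J₂) (hη : η ∈ Set.Icc (0:ℝ) 1) (φ₀ : ℝ) :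
    HasDerivAt (KJ2 J₂ η) (Df J₂ η φ₀) φ₀ := by
  rw [KJ2_eq hη]
  have cw := wf_cont hη
  have hcF : ∀ x : ℝ, Continuous fun t : ℝ =>
      wf η t * Real.exp (-J₂ * Real.cos (2 * (t + x))) / (2 * π) := by
    intro x
    apply Continuous.div_const
    apply cw.mul
    continuity
  have hcF' : ∀ x : ℝ, Continuous fun t : ℝ => wf η t * qf J₂ (t + x) / (2 * π) := by
    intro x
    apply Continuous.div_const
    exact cw.mul ((qf_cont J₂).comp (by continuity))
  have key := intervalIntegral.hasDerivAt_integral_of_dominated_loc_of_deriv_le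
    (𝕜 := ℝ) (μ := MeasureTheory.volume) (a := -π) (b := π)
    (F := fun x t => wf η t * Real.exp (-J₂ * Real.cos (2 * (t + x))) / (2 * π))
    (F' := fun x t => wf η t * qf J₂ (t + x) / (2 * π)) (x₀ := φ₀)
    (bound := fun _ => hfun 2 * (2 * J₂ * Real.exp J₂) / (2 * π))
    (s := Metric.ball φ₀ 1) (Metric.ball_mem_nhds _ one_pos)
    (Filter.Eventually.of_forall fun x => ((hcF x).aestronglyMeasurable).restrict)
    ((hcF φ₀).intervalIntegrable _ _)
    ((hcF' φ₀).aestronglyMeasurable).restrict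
    (Filter.Eventually.of_forall ?_)
    (intervalIntegrable_const)
    (Filter.Eventually.of_forall ?_)
  · exact key.2
  · -- bound
    intro t _ x _
    rw [Real.norm_eq_abs, abs_div, abs_mul]
    have h2π : |(2:ℝ) * π| = 2 * π := abs_of_pos (by positivity)
    rw [h2π, abs_of_nonneg (wf_nonneg hη t)]
    apply div_le_div_of_nonneg_right ?_ (by positivity)
    · exact mul_le_mul (wf_le hη t) (qf_abs_le hJ₂ _) (abs_nonneg _)
        (hfun_nonneg (by norm_num))
  · -- differentiability
    intro t _ x _
    have h1 : HasDerivAt (fun y : ℝ => 2 * (t + y)) 2 x := by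
      simpa using ((hasDerivAt_id x).const_add t).const_mul 2
    have h4 := (((h1.cos).const_mul (-J₂)).exp.const_mul (wf η t)).div_const (2 * π)
    exact h4.congr_deriv (by unfold qf; ring)

lemma bracket_le {η : ℝ} (hη : η ∈ Set.Icc (0:ℝ) 1) {a b : ℝ} (ha1 : a ≤ 1) (hba : |b| ≤ a) :
    hfun (1 + η * b) + hfun (1 - η * b) ≤ hfun (1 + η * a) + hfun (1 - η * a) := by
  obtain ⟨hη0, hη1⟩ := hη
  have ha0 : 0 ≤ a := (abs_nonneg b).trans hba
  rcases le_total 0 b with hb | hb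
  · have hb' : b ≤ a := (le_abs_self b).trans hba
    exact hfun_pair_mono (by positivity) (by nlinarith) (by nlinarith)
  · have hb' : -b ≤ a := (neg_le_abs b).trans hba
    have h := hfun_pair_mono (t := η * (-b)) (s := η * a) (by nlinarith) (by nlinarith) (by nlinarith)
    have e1 : 1 + η * -b = 1 - η * b := by ring
    have e2 : 1 - η * -b = 1 + η * b := by ring
    rw [e1, e2] at h
    linarith

lemma qf_per (J₂ x : ℝ) : qf J₂ (x + 2 * π) = qf J₂ x := by
  unfold qf
  rw [show 2 * (x + 2 * π) = 2 * x + ((2:ℤ) : ℝ) * (2 * π) by push_cast; ring]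
  rw [Real.sin_add_int_mul_two_pi, Real.cos_add_int_mul_two_pi]

lemma qf_neg (J₂ x : ℝ) : qf J₂ (-x) = -qf J₂ x := by
  unfold qf
  rw [show 2 * (-x) = -(2 * x) by ring, Real.sin_neg, Real.cos_neg]
  ring

lemma qf_sub_pi (J₂ x : ℝ) : qf J₂ (x - π) = qf J₂ x := by
  unfold qf
  rw [show 2 * (x - π) = 2 * x - 2 * π by ring, Real.sin_sub_two_pi, Real.cos_sub_two_pi]

lemma qf_pi_sub (J₂ x : ℝ) : qf J₂ (π - x) = -qf J₂ x := by
  unfold qf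
  rw [show 2 * (π - x) = 2 * π - 2 * x by ring, Real.sin_two_pi_sub, Real.cos_two_pi_sub]
  ring

lemma wf_per (η x : ℝ) : wf η (x + 2 * π) = wf η x := by
  unfold wf; rw [Real.cos_add_two_pi]

lemma qf_nonneg_piv {J₂ : ℝ} (hJ₂ : 0 < J₂) {x : ℝ} (hx : x ∈ Set.Icc 0 (π / 2)) :
    0 ≤ qf J₂ x := by
  unfold qf
  have h1 : 0 ≤ Real.sin (2 * x) :=
    Real.sin_nonneg_of_nonneg_of_le_pi (by linarith [hx.1]) (by linarith [hx.2])
  exact mul_nonneg (mul_nonneg (by positivity) h1) (Real.exp_nonneg _)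

lemma Df_nonneg {J₂ η : ℝ} (hJ₂ : 0 < J₂) (hη : η ∈ Set.Icc (0:ℝ) 1) {φ : ℝ}
    (hφ : φ ∈ Set.Icc 0 (π / 2)) : 0 ≤ Df J₂ η φ := by
  unfold Df
  rw [intervalIntegral.integral_div]
  apply div_nonneg _ (by positivity)
  set G : ℝ → ℝ := fun θ => wf η (θ - φ) * qf J₂ θ with hG
  have cG : Continuous G := by
    apply Continuous.mul _ (qf_cont J₂)
    exact (wf_cont hη).comp (continuous_sub_right φ)
  have hper : Function.Periodic G (2 * π) := by
    intro x
    simp only [hG]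
    rw [show x + 2 * π - φ = (x - φ) + 2 * π by ring, wf_per, qf_per]
  have e1 : (∫ θ in (-π)..π, wf η θ * qf J₂ (θ + φ)) = ∫ θ in (-π + φ)..(π + φ), G θ := by
    have h := intervalIntegral.integral_comp_add_right (a := -π) (b := π) G φ
    rw [← h]
    simp only [hG]
    congr 1
    funext θ
    rw [add_sub_cancel_right]
  have e2 : (∫ θ in (-π + φ)..(π + φ), G θ) = ∫ θ in (-π)..π, G θ := by
    have h := hper.intervalIntegral_add_eq (-π + φ) (-π)
    rw [show -π + φ + 2 * π = π + φ by ring, show -π + 2 * π = π by ring] at h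
    exact h
  rw [e1, e2]
  have hGi : ∀ a b : ℝ, IntervalIntegrable G MeasureTheory.volume a b :=
    fun a b => cG.intervalIntegrable a b
  have t1 := intervalIntegral.integral_add_adjacent_intervals (hGi (-π) (-π/2)) (hGi (-π/2) 0)
  have t2 := intervalIntegral.integral_add_adjacent_intervals (hGi (-π) 0) (hGi 0 (π/2))
  have t3 := intervalIntegral.integral_add_adjacent_intervals (hGi (-π) (π/2)) (hGi (π/2) π)
  rw [← t3, ← t2, ← t1]
  have p1 : (∫ x in (-π)..(-π/2), G x) = ∫ x in (0:ℝ)..(π/2), G (x - π) := by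
    rw [intervalIntegral.integral_comp_sub_right G π]
    rw [show (0:ℝ) - π = -π by ring, show π/2 - π = -π/2 by ring]
  have p2 : (∫ x in (-π/2)..(0:ℝ), G x) = ∫ x in (0:ℝ)..(π/2), G (-x) := by
    rw [intervalIntegral.integral_comp_neg G]
    rw [show -(π/2) = -π/2 by ring, neg_zero]
  have p4 : (∫ x in (π/2)..π, G x) = ∫ x in (0:ℝ)..(π/2), G (π - x) := by
    rw [intervalIntegral.integral_comp_sub_left G π]
    rw [show π - π/2 = π/2 by ring, sub_zero]
  rw [p1, p2, p4]
  have c1 : Continuous fun x : ℝ => G (x - π) := cG.comp (continuous_sub_right π)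
  have c2 : Continuous fun x : ℝ => G (-x) := cG.comp continuous_neg
  have c4 : Continuous fun x : ℝ => G (π - x) := cG.comp (continuous_const.sub continuous_id)
  have i1 : IntervalIntegrable (fun x : ℝ => G (x - π)) MeasureTheory.volume 0 (π/2) :=
    c1.intervalIntegrable _ _
  have i2 : IntervalIntegrable (fun x : ℝ => G (-x)) MeasureTheory.volume 0 (π/2) :=
    c2.intervalIntegrable _ _
  have i3 := hGi (0:ℝ) (π/2)
  have i4 : IntervalIntegrable (fun x : ℝ => G (π - x)) MeasureTheory.volume 0 (π/2) :=
    c4.intervalIntegrable _ _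
  rw [← intervalIntegral.integral_add i1 i2, ← intervalIntegral.integral_add (i1.add i2) i3,
      ← intervalIntegral.integral_add ((i1.add i2).add i3) i4]
  apply intervalIntegral.integral_nonneg (by positivity)
  intro x hx
  have hq := qf_nonneg_piv hJ₂ hx
  obtain ⟨hx0, hx2⟩ := hx
  obtain ⟨hφ0, hφ2⟩ := hφ
  have hpi := Real.pi_pos
  have hsx : 0 ≤ Real.sin x := Real.sin_nonneg_of_nonneg_of_le_pi hx0 (by linarith)
  have hsφ : 0 ≤ Real.sin φ := Real.sin_nonneg_of_nonneg_of_le_pi hφ0 (by linarith)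
  have hcx : 0 ≤ Real.cos x := Real.cos_nonneg_of_mem_Icc ⟨by linarith, hx2⟩
  have hcφ : 0 ≤ Real.cos φ := Real.cos_nonneg_of_mem_Icc ⟨by linarith, hφ2⟩
  have hba : |Real.cos (x + φ)| ≤ Real.cos (x - φ) := by
    rw [abs_le, Real.cos_add, Real.cos_sub]
    constructor <;> nlinarith [mul_nonneg hsx hsφ, mul_nonneg hcx hcφ]
  have key := bracket_le hη (Real.cos_le_one (x - φ)) hba
  simp only [hG]
  rw [qf_sub_pi, qf_neg, qf_pi_sub]
  have w1 : wf η (x - π - φ) = hfun (1 - η * Real.cos (x - φ)) := by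
    unfold wf
    rw [show x - π - φ = (x - φ) - π by ring, Real.cos_sub_pi]
    congr 1
    ring
  have w2 : wf η (-x - φ) = hfun (1 + η * Real.cos (x + φ)) := by
    unfold wf
    rw [show -x - φ = -(x + φ) by ring, Real.cos_neg]
  have w4 : wf η (π - x - φ) = hfun (1 - η * Real.cos (x + φ)) := by
    unfold wf
    rw [show π - x - φ = π - (x + φ) by ring, Real.cos_pi_sub]
    congr 1
    ring
  have w3 : wf η (x - φ) = hfun (1 + η * Real.cos (x - φ)) := rfl
  rw [w1, w2, w3, w4]
  nlinarith [mul_nonneg hq (sub_nonneg.2 key)]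

lemma KJ2_per (J₂ η φ : ℝ) : KJ2 J₂ η (φ + π) = KJ2 J₂ η φ := by
  have e : ∀ θ : ℝ, Real.cos (2 * (θ + (φ + π))) = Real.cos (2 * (θ + φ)) := fun θ => by
    rw [show 2 * (θ + (φ + π)) = 2 * (θ + φ) + 2 * π by ring, Real.cos_add_two_pi]
  unfold KJ2
  simp only [e]

lemma KJ2_even (J₂ η φ : ℝ) : KJ2 J₂ η (-φ) = KJ2 J₂ η φ := by
  unfold KJ2
  have e : ∀ θ : ℝ, besselI0 (Real.sqrt (1 + η * Real.cos (-θ)))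
        * Real.exp (-J₂ * Real.cos (2 * (-θ + φ))) / (2 * π)
      = besselI0 (Real.sqrt (1 + η * Real.cos θ))
        * Real.exp (-J₂ * Real.cos (2 * (θ + -φ))) / (2 * π) := by
    intro θ
    rw [Real.cos_neg, show 2 * (-θ + φ) = -(2 * (θ + -φ)) by ring, Real.cos_neg]
  calc (∫ θ in (-π)..π, besselI0 (Real.sqrt (1 + η * Real.cos θ))
          * Real.exp (-J₂ * Real.cos (2 * (θ + -φ))) / (2 * π))
      = ∫ θ in (-π)..π, besselI0 (Real.sqrt (1 + η * Real.cos (-θ)))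
          * Real.exp (-J₂ * Real.cos (2 * (-θ + φ))) / (2 * π) := by
        simp only [e]
    _ = ∫ θ in (-(π:ℝ))..(-(-π:ℝ)), besselI0 (Real.sqrt (1 + η * Real.cos θ))
          * Real.exp (-J₂ * Real.cos (2 * (θ + φ))) / (2 * π) :=
        intervalIntegral.integral_comp_neg (a := -π) (b := π)
          (fun θ => besselI0 (Real.sqrt (1 + η * Real.cos θ))
            * Real.exp (-J₂ * Real.cos (2 * (θ + φ))) / (2 * π))
    _ = ∫ θ in (-π)..π, besselI0 (Real.sqrt (1 + η * Real.cos θ))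
          * Real.exp (-J₂ * Real.cos (2 * (θ + φ))) / (2 * π) := by rw [neg_neg]

lemma Df_per {J₂ η : ℝ} (hJ₂ : 0 < J₂) (hη : η ∈ Set.Icc (0:ℝ) 1) (φ : ℝ) :
    Df J₂ η (φ + π) = Df J₂ η φ := by
  have h1 := (KJ2_hasDeriv hJ₂ hη (φ + π)).comp φ ((hasDerivAt_id φ).add_const π)
  have h2 : (KJ2 J₂ η ∘ fun x => id x + π) = KJ2 J₂ η := funext fun x => KJ2_per J₂ η x
  rw [h2] at h1
  have h3 := h1.unique (KJ2_hasDeriv hJ₂ hη φ)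
  simpa using h3

lemma Df_neg {J₂ η : ℝ} (hJ₂ : 0 < J₂) (hη : η ∈ Set.Icc (0:ℝ) 1) (φ : ℝ) :
    Df J₂ η (-φ) = -Df J₂ η φ := by
  have h1 := (KJ2_hasDeriv hJ₂ hη (-φ)).comp φ (hasDerivAt_neg φ)
  have h2 : (KJ2 J₂ η ∘ fun x => -x) = KJ2 J₂ η := funext fun x => KJ2_even J₂ η x
  rw [h2] at h1
  have h3 := h1.unique (KJ2_hasDeriv hJ₂ hη φ)
  linarith [h3]

theorem KJ2_phase_structure
    (J₂ η : ℝ) (hJ₂ : 0 < J₂) (hη : η ∈ Set.Icc (0:ℝ) 1) :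
    (∀ φ : ℝ, 0 ≤ deriv (KJ2 J₂ η) φ * (Real.sin φ * Real.cos φ)) ∧
    MonotoneOn (KJ2 J₂ η) (Set.Icc 0 (π / 2)) ∧
    AntitoneOn (KJ2 J₂ η) (Set.Icc (π / 2) π) ∧
    (∀ φ ∈ Set.Icc (-π) π, KJ2 J₂ η φ ≤ KJ2 J₂ η (π / 2)) := by
  have hpi := Real.pi_pos
  have hD : ∀ φ : ℝ, HasDerivAt (KJ2 J₂ η) (Df J₂ η φ) φ := fun φ => KJ2_hasDeriv hJ₂ hη φ
  have hderiv : ∀ φ, deriv (KJ2 J₂ η) φ = Df J₂ η φ := fun φ => (hD φ).deriv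
  have contK : Continuous (KJ2 J₂ η) := by
    have hd : Differentiable ℝ (KJ2 J₂ η) := fun x => (hD x).differentiableAt
    exact hd.continuous
  have hDneg : ∀ t, π / 2 ≤ t → t ≤ π → Df J₂ η t ≤ 0 := by
    intro t h h2
    have e : Df J₂ η t = -Df J₂ η (π - t) := by
      have d1 := Df_per hJ₂ hη (t - π)
      rw [show t - π + π = t by ring] at d1
      have d2 := Df_neg hJ₂ hη (π - t)
      rw [show -(π - t) = t - π by ring] at d2
      rw [d1, d2]
    have hnn := Df_nonneg (φ := π - t) hJ₂ hη (Set.mem_Icc.2 ⟨by linarith, by linarith⟩)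
    rw [e]
    linarith
  have key : ∀ t, 0 ≤ t → t ≤ π → 0 ≤ Df J₂ η t * (Real.sin t * Real.cos t) := by
    intro t h0 h2
    rcases le_total t (π / 2) with h | h
    · have hd := Df_nonneg hJ₂ hη (Set.mem_Icc.2 ⟨h0, h⟩)
      have hs := Real.sin_nonneg_of_nonneg_of_le_pi h0 h2
      have hc := Real.cos_nonneg_of_mem_Icc ⟨by linarith, h⟩
      exact mul_nonneg hd (mul_nonneg hs hc)
    · have h4 := hDneg t h h2
      have hs := Real.sin_nonneg_of_nonneg_of_le_pi h0 h2
      have hc : Real.cos t ≤ 0 := Real.cos_nonpos_of_pi_div_two_le_of_le h (by linarith)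
      nlinarith [mul_nonneg hs (neg_nonneg.2 hc)]
  have mono : MonotoneOn (KJ2 J₂ η) (Set.Icc 0 (π / 2)) := by
    apply monotoneOn_of_deriv_nonneg (convex_Icc _ _) contK.continuousOn
    · intro x _
      exact ((hD x).differentiableAt).differentiableWithinAt
    · intro x hx
      rw [interior_Icc] at hx
      rw [hderiv]
      exact Df_nonneg hJ₂ hη (Set.mem_Icc.2 ⟨hx.1.le, hx.2.le⟩)
  have anti : AntitoneOn (KJ2 J₂ η) (Set.Icc (π / 2) π) := by
    apply antitoneOn_of_deriv_nonpos (convex_Icc _ _) contK.continuousOn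
    · intro x _
      exact ((hD x).differentiableAt).differentiableWithinAt
    · intro x hx
      rw [interior_Icc] at hx
      rw [hderiv]
      exact hDneg x hx.1.le hx.2.le
  refine ⟨?_, mono, anti, ?_⟩
  · intro φ
    rw [hderiv]
    set n := ⌊φ / π⌋ with hn
    set t := φ - (n : ℝ) * π with htd
    have hb1 : ((n : ℝ)) ≤ φ / π := Int.floor_le _
    have hb2 : φ / π < (n : ℝ) + 1 := Int.lt_floor_add_one _
    have hb1' : (n : ℝ) * π ≤ φ := (le_div_iff₀ hpi).1 hb1
    have hb2' : φ < ((n : ℝ) + 1) * π := (div_lt_iff₀ hpi).1 hb2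
    have h0 : 0 ≤ t := by rw [htd]; linarith
    have h2 : t ≤ π := by
      rw [htd]
      nlinarith
    have hp : Function.Periodic (Df J₂ η) π := fun x => Df_per hJ₂ hη x
    have hDt : Df J₂ η t = Df J₂ η φ := by rw [htd]; exact hp.sub_int_mul_eq n
    have hsc : Real.sin φ * Real.cos φ = Real.sin t * Real.cos t := by
      have e : 2 * φ = 2 * t + (n : ℝ) * (2 * π) := by rw [htd]; ring
      calc Real.sin φ * Real.cos φ = Real.sin (2 * φ) / 2 := by rw [Real.sin_two_mul]; ring
        _ = Real.sin (2 * t) / 2 := by rw [e, Real.sin_add_int_mul_two_pi]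
        _ = Real.sin t * Real.cos t := by rw [Real.sin_two_mul]; ring
    rw [← hDt, hsc]
    exact key t h0 h2
  · intro φ hφ
    obtain ⟨hl, hr⟩ := hφ
    have final : ∀ ψ, 0 ≤ ψ → ψ ≤ π → KJ2 J₂ η ψ ≤ KJ2 J₂ η (π / 2) := by
      intro ψ h0 h2
      rcases le_total ψ (π / 2) with h | h
      · exact mono (Set.mem_Icc.2 ⟨h0, h⟩) (Set.mem_Icc.2 ⟨by linarith, le_refl _⟩) h
      · exact anti (Set.mem_Icc.2 ⟨le_refl _, by linarith⟩) (Set.mem_Icc.2 ⟨h, h2⟩) h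
    rcases le_total 0 φ with h0 | h0
    · exact final φ h0 hr
    · have e := KJ2_even J₂ η (-φ)
      rw [neg_neg] at e
      rw [e]
      exact final (-φ) (by linarith) (by linarith)
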